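/- (Strong robustness.) Let A be an m×n real matrix, let 1 ≤ k ≤ n, and let C > 1. Suppose that for every subset K ⊆ {1,…,n} with |K| = k, every x' ∈ ℝⁿ, and every w ∈ ℝⁿ with Aw = 0, one has ‖x'_K + w_K‖₁ + (1/C)·‖w_K̄‖₁ ≥ ‖x'_K‖₁. Then for every subset K with |K| = k and every x ∈ ℝⁿ, every ℓ1 minimizer x̂ for (A, x) satisfies ‖x − x̂‖₁ ≤ (2(C+1)/(C−1))·‖x_K̄‖₁. -/

import Mathlib

/-!
Write `x̂ = x + w` with `w` in the null space. Robustness at `x' = -w` gives the null space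
property `C ‖w_K‖₁ ≤ ‖w_K̄‖₁`, while minimality `‖x + w‖₁ ≤ ‖x‖₁` confines `w` to the cone
`‖w_K̄‖₁ ≤ ‖w_K‖₁ + 2 ‖x_K̄‖₁`. Together they bound `‖w_K‖₁` by `2 ‖x_K̄‖₁ / (C - 1)`, and then
`‖w‖₁ = ‖w_K‖₁ + ‖w_K̄‖₁ ≤ 2 (C + 1) / (C - 1) · ‖x_K̄‖₁`.
-/

/-- The ℓ1 norm of a vector in ℝⁿ. -/
noncomputable def l1 {n : ℕ} (x : Fin n → ℝ) : ℝ := ∑ i, |x i|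

/-- The restriction of a vector to the coordinates in `K` (zero outside `K`). -/
def restr {n : ℕ} (K : Finset (Fin n)) (x : Fin n → ℝ) : Fin n → ℝ :=
  fun i => if i ∈ K then x i else 0

section L1

variable {n : ℕ}

@[simp]
lemma l1_zero : l1 (0 : Fin n → ℝ) = 0 := by
  simp [l1]

@[simp]
lemma l1_neg (x : Fin n → ℝ) : l1 (-x) = l1 x := by
  simp [l1]

lemma l1_add_le (x y : Fin n → ℝ) : l1 (x + y) ≤ l1 x + l1 y := by
  rw [l1, l1, l1, ← Finset.sum_add_distrib]
  exact Finset.sum_le_sum fun i _ => abs_add_le _ _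

lemma l1_sub_le_l1_add (x y : Fin n → ℝ) : l1 x - l1 y ≤ l1 (x + y) := by
  have h := l1_add_le (x + y) (-y)
  rw [add_neg_cancel_right, l1_neg] at h
  linarith

lemma restr_add (K : Finset (Fin n)) (x y : Fin n → ℝ) :
    restr K (x + y) = restr K x + restr K y := by
  funext i; by_cases h : i ∈ K <;> simp [restr, h]

lemma restr_neg (K : Finset (Fin n)) (x : Fin n → ℝ) : restr K (-x) = -restr K x := by
  funext i; by_cases h : i ∈ K <;> simp [restr, h]

lemma l1_restr_add_l1_restr_compl (K : Finset (Fin n)) (x : Fin n → ℝ) :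
    l1 (restr K x) + l1 (restr Kᶜ x) = l1 x := by
  rw [l1, l1, l1, ← Finset.sum_add_distrib]
  refine Finset.sum_congr rfl fun i _ => ?_
  by_cases h : i ∈ K <;> simp [restr, h]

end L1

section NullSpaceProperty

variable {n : ℕ} (K : Finset (Fin n))

lemma l1_restr_le_of_robust {c : ℝ} {w : Fin n → ℝ}
    (hrob : ∀ x' : Fin n → ℝ,
      l1 (restr K x' + restr K w) + c * l1 (restr Kᶜ w) ≥ l1 (restr K x')) :
    l1 (restr K w) ≤ c * l1 (restr Kᶜ w) := by
  have h := hrob (-w)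
  rw [restr_neg, neg_add_cancel, l1_zero, l1_neg] at h
  linarith

lemma l1_restr_compl_le_of_l1_add_le {x w : Fin n → ℝ} (hle : l1 (x + w) ≤ l1 x) :
    l1 (restr Kᶜ w) ≤ l1 (restr K w) + 2 * l1 (restr Kᶜ x) := by
  have hK : l1 (restr K x) - l1 (restr K w) ≤ l1 (restr K (x + w)) := by
    rw [restr_add]; exact l1_sub_le_l1_add _ _
  have hKc : l1 (restr Kᶜ w) - l1 (restr Kᶜ x) ≤ l1 (restr Kᶜ (x + w)) := by
    rw [restr_add, add_comm]; exact l1_sub_le_l1_add _ _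
  rw [← l1_restr_add_l1_restr_compl K (x + w), ← l1_restr_add_l1_restr_compl K x] at hle
  linarith

end NullSpaceProperty

lemma add_le_of_mul_le_of_le_add {a b t C : ℝ} (hC : 1 < C)
    (hnsp : C * a ≤ b) (hcone : b ≤ a + 2 * t) :
    a + b ≤ 2 * (C + 1) / (C - 1) * t := by
  rw [div_mul_eq_mul_div, le_div_iff₀ (by linarith)]
  nlinarith

theorem stmt_6_general {m n : ℕ} (A : Matrix (Fin m) (Fin n) ℝ)
    (k : ℕ) (C : ℝ) (hC : 1 < C)
    (hcond : ∀ K : Finset (Fin n), K.card = k →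
      ∀ x' : Fin n → ℝ, ∀ w : Fin n → ℝ, A.mulVec w = 0 →
        l1 (restr K x' + restr K w) + (1 / C) * l1 (restr Kᶜ w) ≥ l1 (restr K x')) :
    ∀ K : Finset (Fin n), K.card = k →
      ∀ x : Fin n → ℝ, ∀ xh : Fin n → ℝ, A.mulVec xh = A.mulVec x →
        (∀ z : Fin n → ℝ, A.mulVec z = A.mulVec x → l1 xh ≤ l1 z) →
        l1 (x - xh) ≤ (2 * (C + 1) / (C - 1)) * l1 (restr Kᶜ x) := by
  intro K hK x xh hA hmin
  set w := xh - x
  have hw : A.mulVec w = 0 := by rw [Matrix.mulVec_sub, hA, sub_self]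
  have hnsp : l1 (restr K w) ≤ 1 / C * l1 (restr Kᶜ w) :=
    l1_restr_le_of_robust K fun x' => hcond K hK x' w hw
  have hcone : l1 (restr Kᶜ w) ≤ l1 (restr K w) + 2 * l1 (restr Kᶜ x) :=
    l1_restr_compl_le_of_l1_add_le K (by rw [add_sub_cancel]; exact hmin x rfl)
  have hCpos : 0 < C := by linarith
  rw [← neg_sub, l1_neg, ← l1_restr_add_l1_restr_compl K w]
  refine add_le_of_mul_le_of_le_add hC ?_ hcone
  rwa [one_div_mul_eq_div, le_div_iff₀' hCpos] at hnsp

theorem stmt_6 {m n : ℕ} (A : Matrix (Fin m) (Fin n) ℝ)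
    (k : ℕ) (hk1 : 1 ≤ k) (hkn : k ≤ n) (C : ℝ) (hC : 1 < C)
    (hcond : ∀ K : Finset (Fin n), K.card = k →
      ∀ x' : Fin n → ℝ, ∀ w : Fin n → ℝ, A.mulVec w = 0 →
        l1 (restr K x' + restr K w) + (1 / C) * l1 (restr Kᶜ w) ≥ l1 (restr K x')) :
    ∀ K : Finset (Fin n), K.card = k →
      ∀ x : Fin n → ℝ, ∀ xh : Fin n → ℝ, A.mulVec xh = A.mulVec x →
        (∀ z : Fin n → ℝ, A.mulVec z = A.mulVec x → l1 xh ≤ l1 z) →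
        l1 (x - xh) ≤ (2 * (C + 1) / (C - 1)) * l1 (restr Kᶜ x) :=
  stmt_6_general A k C hC hcond
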